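/- arXiv:math/0503612 — 7 statements merged into one kernel-verified Lean document; each statement's English description precedes it below -/
import Mathlib

section
/- Let E be a Banach space, let L and P be continuous linear operators on E with P a projection (P∘P = P), and set Q = I − P. Then for every t ∈ ℝ the Duhamel relation holds: exp(tL) = exp(tQL) + ∫_0^t exp((t−s)L) ∘ (P∘L) ∘ exp(s QL) ds, where exp denotes the operator exponential and the integral is a Bochner integral of operator-valued functions. -/
open MeasureTheory NormedSpace

/-! The path `s ↦ exp ((t - s) • A) * exp (s • B)` runs from `exp (t • A)` at `s = 0` to
`exp (t • B)` at `s = t`, and its derivative is `-exp ((t - s) • A) * (A - B) * exp (s • B)`;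
the fundamental theorem of calculus gives the Duhamel formula for any two elements `A, B` of a
real Banach algebra. With `A = L` and `B = QL` one has `A - B = (1 - Q)L = PL`. -/

section Duhamel

variable {𝔸 : Type*} [NormedRing 𝔸] [NormedAlgebra ℝ 𝔸] [CompleteSpace 𝔸]

theorem hasDerivAt_exp_sub_smul_mul_exp_smul (A B : 𝔸) (t s : ℝ) :
    HasDerivAt (fun u : ℝ => exp ((t - u) • A) * exp (u • B))
      (-(exp ((t - s) • A) * (A - B) * exp (s • B))) s := by
  have hA : HasDerivAt (fun u : ℝ => exp ((t - u) • A)) (-(exp ((t - s) • A) * A)) s :=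
    (hasDerivAt_exp_smul_const A (t - s)).comp_const_sub t s
  have hB : HasDerivAt (fun u : ℝ => exp (u • B)) (B * exp (s • B)) s :=
    hasDerivAt_exp_smul_const' B s
  refine (hA.mul hB).congr_deriv ?_
  noncomm_ring

theorem continuous_exp_smul (A : 𝔸) : Continuous fun s : ℝ => exp (s • A) :=
  continuous_iff_continuousAt.2 fun s => (hasDerivAt_exp_smul_const A s).continuousAt

theorem exp_smul_eq_exp_smul_add_integral (A B : 𝔸) (t : ℝ) :
    exp (t • A) = exp (t • B) + ∫ s in (0 : ℝ)..t, exp ((t - s) • A) * (A - B) * exp (s • B) := by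
  have hcont : Continuous fun s : ℝ => exp ((t - s) • A) * (A - B) * exp (s • B) :=
    (((continuous_exp_smul A).comp (continuous_sub_left t)).mul continuous_const).mul
      (continuous_exp_smul B)
  have hFTC := intervalIntegral.integral_eq_sub_of_hasDerivAt
    (fun s _ => hasDerivAt_exp_sub_smul_mul_exp_smul A B t s)
    (hcont.neg.intervalIntegrable 0 t)
  simp only [intervalIntegral.integral_neg, sub_self, sub_zero, zero_smul, exp_zero, mul_one,
    one_mul] at hFTC
  rw [← neg_neg (∫ s in (0 : ℝ)..t, _), hFTC]
  abel

end Duhamel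

theorem duhamel_relation_general
    {E : Type*} [NormedAddCommGroup E] [NormedSpace ℝ E] [CompleteSpace E]
    (L P : E →L[ℝ] E) (Q : E →L[ℝ] E) (hQ : Q = 1 - P) (t : ℝ) :
    NormedSpace.exp (t • L)
      = NormedSpace.exp (t • (Q * L)) +
        ∫ s in (0:ℝ)..t,
          NormedSpace.exp ((t - s) • L) * (P * L) * NormedSpace.exp (s • (Q * L)) := by
  have hPL : P * L = L - Q * L := by
    rw [hQ]
    noncomm_ring
  rw [hPL]
  exact exp_smul_eq_exp_smul_add_integral L (Q * L) t

/-- **Duhamel relation between the full and the orthogonal dynamics.**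
For continuous linear operators `L, P` on a Banach space with `P` a projection and `Q = I - P`,
`exp (tL) = exp (tQL) + ∫₀ᵗ exp ((t-s)L) ∘ (P∘L) ∘ exp (sQL) ds`. Here multiplication of
continuous linear maps is composition. -/
theorem duhamel_relation
    {E : Type*} [NormedAddCommGroup E] [NormedSpace ℝ E] [CompleteSpace E]
    (L P : E →L[ℝ] E) (hP : P * P = P) (Q : E →L[ℝ] E) (hQ : Q = 1 - P) (t : ℝ) :
    NormedSpace.exp (t • L)
      = NormedSpace.exp (t • (Q * L)) +
        ∫ s in (0:ℝ)..t,
          NormedSpace.exp ((t - s) • L) * (P * L) * NormedSpace.exp (s • (Q * L)) :=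
  duhamel_relation_general L P Q hQ t
end

section
/- Let H be a real Hilbert space, let L be a continuous linear operator on H that is skew-adjoint (⟨Lu, v⟩ = −⟨u, Lv⟩ for all u, v), let P be the orthogonal projection onto a closed subspace of H, and set Q = I − P. Then for every v ∈ H, every h in the range of P, and every s ∈ ℝ: ⟨L Q exp(sQL) Q L v, h⟩ = − ⟨exp(sQL) Q L v, Q L h⟩. That is, each coefficient of the memory kernel equals minus a temporal correlation of the noise processes exp(tQL)QLv and exp(tQL)QLh (fluctuation–dissipation relation: the memory kernel is built from covariances of the noise). -/
/-! The exponential plays no role: moving `L` across the inner product by skew-adjointness and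
then `Q = I - P` by self-adjointness turns `⟪L (Q x), h⟫` into `-⟪x, Q (L h)⟫` for every `x`. -/

open RealInnerProductSpace

section

variable {E : Type*} [NormedAddCommGroup E] [InnerProductSpace ℝ E]

theorem LinearMap.IsSymmetric.inner_skew_apply_left {L Q : E →ₗ[ℝ] E}
    (hL : ∀ u v : E, ⟪L u, v⟫ = -⟪u, L v⟫) (hQ : Q.IsSymmetric) (x y : E) :
    ⟪L (Q x), y⟫ = -⟪x, Q (L y)⟫ := by
  rw [hL, hQ]

theorem Submodule.isSymmetric_one_sub_starProjection (K : Submodule ℝ E)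
    [K.HasOrthogonalProjection] :
    (((1 : E →L[ℝ] E) - K.starProjection : E →L[ℝ] E) : E →ₗ[ℝ] E).IsSymmetric := by
  rw [ContinuousLinearMap.toLinearMap_sub, ContinuousLinearMap.toLinearMap_one]
  exact LinearMap.IsSymmetric.one.sub K.starProjection_isSymmetric

end

theorem memory_kernel_is_noise_covariance_general
    {H : Type*} [NormedAddCommGroup H] [InnerProductSpace ℝ H]
    (L : H →L[ℝ] H) (hL : ∀ u v : H, ⟪L u, v⟫ = -⟪u, L v⟫)
    (K : Submodule ℝ H) [K.HasOrthogonalProjection]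
    (P : H →L[ℝ] H) (hP : ∀ x : H, P x = (K.orthogonalProjectionOnto x : H))
    (Q : H →L[ℝ] H) (hQ : Q = 1 - P)
    (v h : H) (s : ℝ) :
    ⟪L (Q (NormedSpace.exp (s • (Q * L)) (Q (L v)))), h⟫
      = -⟪NormedSpace.exp (s • (Q * L)) (Q (L v)), Q (L h)⟫ := by
  have hPK : P = K.starProjection := ContinuousLinearMap.ext hP
  have hQsymm : (Q : H →ₗ[ℝ] H).IsSymmetric := by
    rw [hQ, hPK]
    exact K.isSymmetric_one_sub_starProjection
  exact hQsymm.inner_skew_apply_left hL _ h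

/-- **Fluctuation–dissipation: the memory kernel is built from covariances of the noise.**
On a real Hilbert space, for a skew-adjoint continuous linear operator `L` and the orthogonal
projection `P` onto a closed subspace `K` (with `Q = I - P`), for every `v`, every `h` in the
range of `P`, and every `s`:
`⟨L Q exp (sQL) Q L v, h⟩ = -⟨exp (sQL) Q L v, Q L h⟩`. -/
theorem memory_kernel_is_noise_covariance
    {H : Type*} [NormedAddCommGroup H] [InnerProductSpace ℝ H] [CompleteSpace H]
    (L : H →L[ℝ] H) (hL : ∀ u v : H, ⟪L u, v⟫ = -⟪u, L v⟫)
    (K : Submodule ℝ H) (hK : IsClosed (K : Set H)) [K.HasOrthogonalProjection]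
    (P : H →L[ℝ] H) (hP : ∀ x : H, P x = (K.orthogonalProjectionOnto x : H))
    (Q : H →L[ℝ] H) (hQ : Q = 1 - P)
    (v h : H) (hh : h ∈ K) (s : ℝ) :
    ⟪L (Q (NormedSpace.exp (s • (Q * L)) (Q (L v)))), h⟫
      = -⟪NormedSpace.exp (s • (Q * L)) (Q (L v)), Q (L h)⟫ :=
  memory_kernel_is_noise_covariance_general L hL K P hP Q hQ v h s
end

section
/- Let H be a real Hilbert space, let L be a continuous linear operator on H that is skew-adjoint (⟨Lu, v⟩ = −⟨u, Lv⟩ for all u, v), let x₁ ∈ H with ‖x₁‖ = 1, let P be the orthogonal projection onto the span of x₁, and set Q = I − P. Define c(t) = ⟨exp(tL) x₁, x₁⟩ and the memory kernel K(s) = ⟨exp(sQL) Q L x₁, Q L x₁⟩. Then: (a) the noise term remains orthogonal to x₁, i.e. ⟨exp(tQL) Q L x₁, x₁⟩ = 0 for all t; and (b) c satisfies the linear integro-differential equation c′(t) = ⟨L x₁, x₁⟩ c(t) − ∫_0^t K(s) c(t−s) ds for all t. (This is the fluctuation–dissipation theorem of the first kind: the autocorrelation of the resolved variable decays according to the same equation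 as its projected mean.) -/
/-!
Put `A = QL` and `v = QLx₁`. Every vector `Au` lies in the range of `Q`, so it is orthogonal to
`x₁`. Hence `t ↦ ⟪exp(tA) v, x₁⟫` has zero derivative and keeps its value `⟪v, x₁⟫ = 0` at
`t = 0`, which gives (a). For (b), split `Lx₁ = ⟪Lx₁, x₁⟫ x₁ + v`, so that
`c'(t) = ⟪Lx₁, x₁⟫ c(t) + ⟪exp(tL) v, x₁⟫`. Duhamel's formula
`exp(tA) - exp(tL) = ∫₀ᵗ exp((t-s)L) (A - L) exp(sA) ds`, combined with (a), evaluates the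
last term. By skew-adjointness, `A - L = -PL` sends every `w ⟂ x₁` to `⟪w, v⟫ x₁`. Applied to
`w = exp(sA) v`, this turns the integrand into `K(s) c(t-s)`.
-/

open RealInnerProductSpace

section Duhamel

variable {𝔸 : Type*} [NormedRing 𝔸] [NormedAlgebra ℝ 𝔸] [CompleteSpace 𝔸]

theorem continuous_exp_smul_mul_mul_exp_smul (A B C : 𝔸) (t : ℝ) :
    Continuous fun s : ℝ => NormedSpace.exp ((t - s) • B) * C * NormedSpace.exp (s • A) :=
  (((differentiable_exp_smul_const ℝ B).continuous.comp (continuous_sub_left t)).mul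
    continuous_const).mul (differentiable_exp_smul_const ℝ A).continuous

theorem hasDerivAt_exp_smul_mul_exp_smul (A B : 𝔸) (t s : ℝ) :
    HasDerivAt (fun r : ℝ => NormedSpace.exp ((t - r) • B) * NormedSpace.exp (r • A))
      (NormedSpace.exp ((t - s) • B) * (A - B) * NormedSpace.exp (s • A)) s := by
  have hB : HasDerivAt (fun r : ℝ => NormedSpace.exp ((t - r) • B))
      (-(NormedSpace.exp ((t - s) • B) * B)) s := by
    simpa [Function.comp_def] using
      (hasDerivAt_exp_smul_const B (t - s)).scomp s ((hasDerivAt_id s).const_sub t)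
  refine (hB.mul (hasDerivAt_exp_smul_const' A s)).congr_deriv ?_
  rw [mul_sub, sub_mul, neg_mul, mul_assoc, mul_assoc]
  abel

theorem exp_smul_sub_exp_smul_eq_integral (A B : 𝔸) (t : ℝ) :
    NormedSpace.exp (t • A) - NormedSpace.exp (t • B)
      = ∫ s in (0 : ℝ)..t, NormedSpace.exp ((t - s) • B) * (A - B) * NormedSpace.exp (s • A) := by
  rw [intervalIntegral.integral_eq_sub_of_hasDerivAt
    (fun s _ => hasDerivAt_exp_smul_mul_exp_smul A B t s)
    ((continuous_exp_smul_mul_mul_exp_smul A B (A - B) t).intervalIntegrable _ _)]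
  simp

end Duhamel

section InnerProduct

variable {E : Type*} [NormedAddCommGroup E] [InnerProductSpace ℝ E]

theorem HasDerivAt.inner_apply_left {F : ℝ → E →L[ℝ] E} {F' : E →L[ℝ] E} {s : ℝ}
    (hF : HasDerivAt F F' s) (u w : E) :
    HasDerivAt (fun r => ⟪F r u, w⟫) ⟪F' u, w⟫ s := by
  simpa using (hF.clm_apply (hasDerivAt_const s u)).inner ℝ (hasDerivAt_const s w)

theorem compl_proj_mul_sub_apply {L Q : E →L[ℝ] E} (hL : ∀ u v : E, ⟪L u, v⟫ = -⟪u, L v⟫)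
    {x₁ : E} (hQ : ∀ v, Q v = v - ⟪v, x₁⟫ • x₁) {w : E} (hw : ⟪w, x₁⟫ = 0) :
    (Q * L - L) w = ⟪w, Q (L x₁)⟫ • x₁ := by
  have hQLx₁ : ⟪w, Q (L x₁)⟫ = ⟪w, L x₁⟫ := by
    rw [hQ, inner_sub_right, real_inner_smul_right, hw, mul_zero, sub_zero]
  rw [hQLx₁, sub_apply, mul_apply_eq_comp, hQ, hL]
  module

variable [CompleteSpace E]

theorem inner_exp_smul_apply_eq_of_forall_inner_apply_eq_zero (A : E →L[ℝ] E) {w : E}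
    (hA : ∀ u, ⟪A u, w⟫ = 0) (v : E) (t : ℝ) :
    ⟪NormedSpace.exp (t • A) v, w⟫ = ⟪v, w⟫ := by
  have hderiv (s : ℝ) : HasDerivAt (fun r => ⟪NormedSpace.exp (r • A) v, w⟫) 0 s := by
    simpa [hA] using (hasDerivAt_exp_smul_const' A s).inner_apply_left v w
  simpa using is_const_of_deriv_eq_zero (fun s => (hderiv s).differentiableAt)
    (fun s => (hderiv s).deriv) t 0

theorem inner_exp_smul_apply_sub_inner_exp_smul_apply (A B : E →L[ℝ] E) (v w : E) (t : ℝ) :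
    ⟪NormedSpace.exp (t • A) v, w⟫ - ⟪NormedSpace.exp (t • B) v, w⟫
      = ∫ s in (0 : ℝ)..t,
          ⟪NormedSpace.exp ((t - s) • B) ((A - B) (NormedSpace.exp (s • A) v)), w⟫ := by
  let φ : (E →L[ℝ] E) →L[ℝ] ℝ := (innerSL ℝ w).comp (ContinuousLinearMap.apply ℝ E v)
  have hφ (T : E →L[ℝ] E) : φ T = ⟪T v, w⟫ := real_inner_comm _ _
  rw [← inner_sub_left, ← sub_apply, exp_smul_sub_exp_smul_eq_integral A B t, ← hφ,
    ← φ.intervalIntegral_comp_comm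
      ((continuous_exp_smul_mul_mul_exp_smul A B (A - B) t).intervalIntegrable _ _)]
  simp only [hφ, mul_apply_eq_comp]

end InnerProduct

/-- **Fluctuation–dissipation theorem of the first kind.**
On a real Hilbert space, let `L` be skew-adjoint, `x₁` a unit vector, `P` the orthogonal
projection onto the span of `x₁` (`P v = ⟨v, x₁⟩ x₁`), `Q = I - P`. With the autocorrelation
`c(t) = ⟨exp (tL) x₁, x₁⟩` and the memory kernel `K(s) = ⟨exp (sQL) Q L x₁, Q L x₁⟩`:
(a) the noise stays orthogonal to `x₁`, i.e. `⟨exp (tQL) Q L x₁, x₁⟩ = 0` for all `t`; and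
(b) `c′(t) = ⟨L x₁, x₁⟩ c(t) - ∫₀ᵗ K(s) c(t-s) ds` for all `t`. -/
theorem fluctuation_dissipation_first_kind
    {H : Type*} [NormedAddCommGroup H] [InnerProductSpace ℝ H] [CompleteSpace H]
    (L : H →L[ℝ] H) (hL : ∀ u v : H, ⟪L u, v⟫ = -⟪u, L v⟫)
    (x₁ : H) (hx₁ : ‖x₁‖ = 1)
    (P : H →L[ℝ] H) (hP : ∀ v : H, P v = ⟪v, x₁⟫ • x₁)
    (Q : H →L[ℝ] H) (hQ : Q = 1 - P)
    (c Kmem : ℝ → ℝ)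
    (hc : ∀ t : ℝ, c t = ⟪NormedSpace.exp (t • L) x₁, x₁⟫)
    (hK : ∀ s : ℝ, Kmem s
      = ⟪NormedSpace.exp (s • (Q * L)) (Q (L x₁)), Q (L x₁)⟫) :
    (∀ t : ℝ, ⟪NormedSpace.exp (t • (Q * L)) (Q (L x₁)), x₁⟫ = 0)
    ∧ ∀ t : ℝ,
        HasDerivAt c (⟪L x₁, x₁⟫ * c t - ∫ s in (0:ℝ)..t, Kmem s * c (t - s)) t := by
  have hQ' (v : H) : Q v = v - ⟪v, x₁⟫ • x₁ := by simp [hQ, hP]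
  have hQ_orth (u : H) : ⟪Q u, x₁⟫ = 0 := by
    rw [hQ', inner_sub_left, real_inner_smul_left, real_inner_self_eq_norm_sq, hx₁]
    ring
  have noise_orth (t : ℝ) : ⟪NormedSpace.exp (t • (Q * L)) (Q (L x₁)), x₁⟫ = 0 := by
    rw [inner_exp_smul_apply_eq_of_forall_inner_apply_eq_zero _ (fun u => hQ_orth (L u)),
      hQ_orth]
  refine ⟨noise_orth, fun t => ?_⟩
  have noise_eq : ⟪NormedSpace.exp (t • L) (Q (L x₁)), x₁⟫
      = -∫ s in (0:ℝ)..t, Kmem s * c (t - s) := by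
    have duhamel := inner_exp_smul_apply_sub_inner_exp_smul_apply (Q * L) L (Q (L x₁)) x₁ t
    rw [noise_orth, zero_sub, neg_eq_iff_eq_neg] at duhamel
    rw [duhamel, neg_inj]
    refine intervalIntegral.integral_congr fun s _ => ?_
    rw [compl_proj_mul_sub_apply hL hQ' (noise_orth s), map_smul, real_inner_smul_left, hK,
      real_inner_comm, hc]
  have hc_deriv : HasDerivAt c ⟪NormedSpace.exp (t • L) (L x₁), x₁⟫ t := by
    simpa [funext hc, mul_apply_eq_comp] using
      (hasDerivAt_exp_smul_const L t).inner_apply_left x₁ x₁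
  have hLx₁ : L x₁ = ⟪L x₁, x₁⟫ • x₁ + Q (L x₁) := by rw [hQ']; abel
  convert hc_deriv using 1
  conv_rhs => rw [hLx₁, map_add, inner_add_left, map_smul, real_inner_smul_left, noise_eq, ← hc]
  ring
end

section
/- Let E be a Banach space, let L and P be continuous linear operators on E with P a projection (P∘P = P), and set Q = I − P. Then for every v ∈ E, the error incurred by replacing the orthogonal dynamics exp(sQL) with the full dynamics exp(sL) inside the Mori–Zwanzig memory term is third order in time: ‖ ∫_0^t exp((t−s)L) P L exp(sQL) Q L v ds − ∫_0^t exp((t−s)L) P L Q exp(sL) Q L v ds ‖ = O(t³) as t → 0, i.e. there exist C > 0 and δ > 0 with the left-hand side bounded by C t³ for 0 ≤ t ≤ δ. -/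
/-!
Since `Q` is idempotent, `D(s) = exp(sQL) Q - Q exp(sL) Q` vanishes at `s = 0`, and so does its
derivative `exp(sQL) QLQ - Q exp(sL) LQ`; hence `‖D(s)‖ = O(s²)` by applying the mean value
inequality twice. The two integrands differ by `exp((t-s)L) P L D(s) L v`, so integrating over
`[0, t]` gives an `O(t³)` error.
-/

open MeasureTheory Set NormedSpace ContinuousLinearMap

theorem norm_le_mul_sq_of_hasDerivAt {F : Type*} [NormedAddCommGroup F] [NormedSpace ℝ F]
    {f f' f'' : ℝ → F} (hf : ∀ x, HasDerivAt f (f' x) x) (hf' : ∀ x, HasDerivAt f' (f'' x) x)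
    (h₀ : f 0 = 0) (h₀' : f' 0 = 0) {K s : ℝ} (hs : 0 ≤ s) (hK : ∀ r ∈ Icc 0 s, ‖f'' r‖ ≤ K) :
    ‖f s‖ ≤ K * s ^ 2 := by
  have hK₀ : 0 ≤ K := (norm_nonneg _).trans (hK 0 ⟨le_rfl, hs⟩)
  have hf'_le : ∀ r ∈ Ico 0 s, ‖f' r‖ ≤ K * s := fun r hr => by
    have := norm_image_sub_le_of_norm_deriv_le_segment' (fun x _ => (hf' x).hasDerivWithinAt)
      (fun x hx => hK x (Ico_subset_Icc_self hx)) r (Ico_subset_Icc_self hr)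
    rw [h₀', sub_zero, sub_zero] at this
    exact this.trans (by gcongr; exact hr.2.le)
  have := norm_image_sub_le_of_norm_deriv_le_segment' (fun x _ => (hf x).hasDerivWithinAt)
    hf'_le s ⟨hs, le_rfl⟩
  rwa [h₀, sub_zero, sub_zero, mul_assoc, ← sq] at this

section NormedAlgebra

variable {𝔸 : Type*} [NormedRing 𝔸] [NormedAlgebra ℝ 𝔸] [CompleteSpace 𝔸]

@[fun_prop]
theorem Continuous.exp_smul {X : Type*} [TopologicalSpace X] {f : X → ℝ} (hf : Continuous f)
    (x : 𝔸) : Continuous fun y => exp (f y • x) :=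
  (differentiable_exp_smul_const ℝ x).continuous.comp hf

theorem exists_norm_exp_smul_le (x : 𝔸) : ∃ M ≥ 0, ∀ r ∈ Icc (0 : ℝ) 1, ‖exp (r • x)‖ ≤ M := by
  obtain ⟨M, hM⟩ := isCompact_Icc.exists_bound_of_continuousOn
    (continuous_id.exp_smul x).continuousOn (s := Icc (0 : ℝ) 1)
  exact ⟨M, (norm_nonneg _).trans (hM 0 ⟨le_rfl, zero_le_one⟩), hM⟩

theorem IsIdempotentElem.exists_norm_exp_smul_mul_sub_le {q : 𝔸} (hq : IsIdempotentElem q)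
    (b : 𝔸) : ∃ K ≥ 0, ∀ s ∈ Icc (0 : ℝ) 1,
      ‖exp (s • (q * b)) * q - q * exp (s • b) * q‖ ≤ K * s ^ 2 := by
  set D₂ : ℝ → 𝔸 := fun s =>
    exp (s • (q * b)) * (q * b) * (q * b) * q - q * (exp (s • b) * b * b) * q
  obtain ⟨K, hK⟩ := isCompact_Icc.exists_bound_of_continuousOn
    (show Continuous D₂ by fun_prop).continuousOn (s := Icc (0 : ℝ) 1)
  refine ⟨K, (norm_nonneg _).trans (hK 0 ⟨le_rfl, zero_le_one⟩), fun s hs => ?_⟩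
  refine norm_le_mul_sq_of_hasDerivAt (f'' := D₂)
    (fun r => ((hasDerivAt_exp_smul_const (q * b) r).mul_const q).sub
      (((hasDerivAt_exp_smul_const b r).const_mul q).mul_const q))
    (fun r => (((hasDerivAt_exp_smul_const (q * b) r).mul_const (q * b)).mul_const q).sub
      ((((hasDerivAt_exp_smul_const b r).mul_const b).const_mul q).mul_const q))
    ?_ ?_ hs.1 fun r hr => hK r ⟨hr.1, hr.2.trans hs.2⟩
  · simp [hq.eq]
  · simp [mul_assoc]

end NormedAlgebra

/-- **Third-order accuracy of the short-memory approximation of the memory term.**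
For continuous linear operators `L, P` on a Banach space with `P` a projection and `Q = I - P`,
and for every `v`, replacing the orthogonal dynamics `exp (sQL)` by the full dynamics
`exp (sL)` (with the harmless extra factor `Q`) inside the Mori–Zwanzig memory term produces an
`O(t³)` error as `t → 0`. -/
theorem short_memory_third_order
    {E : Type*} [NormedAddCommGroup E] [NormedSpace ℝ E] [CompleteSpace E]
    (L P : E →L[ℝ] E) (hP : P * P = P) (Q : E →L[ℝ] E) (hQ : Q = 1 - P)
    (v : E) :
    ∃ C > (0:ℝ), ∃ δ > (0:ℝ), ∀ t : ℝ, 0 ≤ t → t ≤ δ →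
      ‖(∫ s in (0:ℝ)..t,
          NormedSpace.exp ((t - s) • L)
            (P (L (NormedSpace.exp (s • (Q * L)) (Q (L v))))))
        - ∫ s in (0:ℝ)..t,
            NormedSpace.exp ((t - s) • L)
              (P (L (Q (NormedSpace.exp (s • L) (Q (L v))))))‖
        ≤ C * t ^ 3 := by
  obtain ⟨K, hK₀, hK⟩ := (hQ ▸ IsIdempotentElem.one_sub hP).exists_norm_exp_smul_mul_sub_le L
  obtain ⟨M, hM₀, hM⟩ := exists_norm_exp_smul_le L
  set C := M * (‖P‖ * (‖L‖ * (K * ‖L v‖))) + 1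
  refine ⟨C, by positivity, 1, one_pos, fun t ht₀ ht₁ => ?_⟩
  rw [← intervalIntegral.integral_sub (Continuous.intervalIntegrable (by fun_prop) _ _)
    (Continuous.intervalIntegrable (by fun_prop) _ _)]
  calc _ ≤ C * t ^ 2 * |t - 0| := intervalIntegral.norm_integral_le_of_norm_le_const fun s hs => ?_
    _ = C * t ^ 3 := by rw [sub_zero, abs_of_nonneg ht₀]; ring
  rw [uIoc_of_le ht₀] at hs
  set D := exp (s • (Q * L)) * Q - Q * exp (s • L) * Q
  calc _ = ‖exp ((t - s) • L) (P (L (D (L v))))‖ := by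
        simp only [D, sub_apply, mul_apply_eq_comp, map_sub]
    _ ≤ ‖exp ((t - s) • L)‖ * (‖P‖ * (‖L‖ * (‖D‖ * ‖L v‖))) :=
        le_opNorm_of_le _ <| le_opNorm_of_le _ <| le_opNorm_of_le _ <| le_opNorm _ _
    _ ≤ M * (‖P‖ * (‖L‖ * (K * t ^ 2 * ‖L v‖))) := by
        gcongr
        · exact hM (t - s) ⟨by linarith [hs.2], by linarith [hs.1]⟩
        · exact (hK s ⟨hs.1.le, hs.2.trans ht₁⟩).trans
            (mul_le_mul_of_nonneg_left (pow_le_pow_left₀ hs.1.le hs.2 2) hK₀)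
    _ ≤ C * t ^ 2 := by nlinarith
end

section
/- Let E be a Banach space, let L and P be continuous linear operators on E with P a projection (P∘P = P), and set Q = I − P. Then for every v ∈ E the t-model approximation of the Mori–Zwanzig memory term is second-order accurate in time: ‖ ∫_0^t exp((t−s)L) P L exp(sQL) Q L v ds − t · exp(tL) P L Q L v ‖ = O(t²) as t → 0, i.e. there exist C > 0 and δ > 0 with the left-hand side bounded by C t² for 0 ≤ t ≤ δ. -/
/-! The integrand `exp((t-s)L) PL exp(sQL) QLv` equals the t-model integrand `exp(tL) PLQLv` at
`s = 0`, and on `[0, 1]` the operator exponentials `u ↦ exp(u • A)` are bounded by `exp ‖A‖` and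
Lipschitz with constant `exp ‖A‖ ‖A‖`. Hence the two integrands differ by `O(s)`, and integrating
over `[0, t]` gives an `O(t²)` error. -/

open MeasureTheory NormedSpace Set Nat

section OperatorExponential

variable {E : Type*} [NormedAddCommGroup E] [NormedSpace ℝ E]

lemma norm_inv_factorial_smul_pow_le (A : E →L[ℝ] E) (n : ℕ) :
    ‖(n ! : ℝ)⁻¹ • A ^ n‖ ≤ ‖A‖ ^ n / n ! := by
  rw [norm_smul, norm_inv, RCLike.norm_natCast, inv_mul_eq_div]
  gcongr
  rcases n.eq_zero_or_pos with rfl | hn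
  · rw [pow_zero, pow_zero]
    exact ContinuousLinearMap.norm_id_le
  · exact norm_pow_le' A hn

lemma norm_exp_le_exp_norm (A : E →L[ℝ] E) : ‖exp A‖ ≤ Real.exp ‖A‖ := by
  have hsum : Summable fun n : ℕ => ‖(n ! : ℝ)⁻¹ • A ^ n‖ :=
    .of_nonneg_of_le (fun _ => norm_nonneg _) (norm_inv_factorial_smul_pow_le A)
      (Real.summable_pow_div_factorial ‖A‖)
  rw [exp_eq_tsum ℝ, Real.exp_eq_exp_ℝ, exp_eq_tsum_div]
  exact (norm_tsum_le_tsum_norm hsum).trans <|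
    hsum.tsum_le_tsum (norm_inv_factorial_smul_pow_le A) (Real.summable_pow_div_factorial ‖A‖)

lemma norm_exp_smul_le (A : E →L[ℝ] E) {u : ℝ} (hu : |u| ≤ 1) :
    ‖exp (u • A)‖ ≤ Real.exp ‖A‖ := by
  refine (norm_exp_le_exp_norm _).trans (Real.exp_le_exp.2 ?_)
  rw [norm_smul, Real.norm_eq_abs]
  exact mul_le_of_le_one_left (norm_nonneg A) hu

variable [CompleteSpace E]

lemma norm_exp_smul_sub_exp_smul_le (A : E →L[ℝ] E) {a b : ℝ} (ha : |a| ≤ 1) (hb : |b| ≤ 1) :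
    ‖exp (b • A) - exp (a • A)‖ ≤ Real.exp ‖A‖ * ‖A‖ * |b - a| := by
  have hderiv : ∀ u ∈ Icc (-1 : ℝ) 1,
      HasDerivWithinAt (fun u : ℝ => exp (u • A)) (exp (u • A) * A) (Icc (-1) 1) u :=
    fun u _ => (hasDerivAt_exp_smul_const A u).hasDerivWithinAt
  have hbound : ∀ u ∈ Icc (-1 : ℝ) 1, ‖exp (u • A) * A‖ ≤ Real.exp ‖A‖ * ‖A‖ := fun u hu =>
    (norm_mul_le _ _).trans <|
      mul_le_mul_of_nonneg_right (norm_exp_smul_le A (abs_le.2 hu)) (norm_nonneg A)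
  simpa only [Real.norm_eq_abs] using
    (convex_Icc (-1 : ℝ) 1).norm_image_sub_le_of_norm_hasDerivWithin_le hderiv hbound
      (abs_le.1 ha) (abs_le.1 hb)

lemma norm_exp_mul_mul_exp_sub_exp_mul_le (A M B : E →L[ℝ] E) {s t : ℝ} (hs : 0 ≤ s)
    (hst : s ≤ t) (ht : t ≤ 1) :
    ‖exp ((t - s) • A) * M * exp (s • B) - exp (t • A) * M‖
      ≤ Real.exp ‖A‖ * ‖M‖ * (Real.exp ‖B‖ * ‖B‖ + ‖A‖) * s := by
  have h_ts : |t - s| ≤ 1 := abs_le.2 ⟨by linarith, by linarith⟩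
  have h_t : |t| ≤ 1 := abs_le.2 ⟨by linarith, ht⟩
  have h_s : |s| ≤ 1 := abs_le.2 ⟨by linarith, by linarith⟩
  have hB : ‖exp (s • B) - 1‖ ≤ Real.exp ‖B‖ * ‖B‖ * s := by
    have := norm_exp_smul_sub_exp_smul_le B (a := 0) (by simp) h_s
    rwa [zero_smul, exp_zero, sub_zero, abs_of_nonneg hs] at this
  have hA : ‖exp ((t - s) • A) - exp (t • A)‖ ≤ Real.exp ‖A‖ * ‖A‖ * s := by
    have := norm_exp_smul_sub_exp_smul_le A h_t h_ts
    rwa [sub_sub_cancel_left, abs_neg, abs_of_nonneg hs] at this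
  calc ‖exp ((t - s) • A) * M * exp (s • B) - exp (t • A) * M‖
      = ‖exp ((t - s) • A) * M * (exp (s • B) - 1) + (exp ((t - s) • A) - exp (t • A)) * M‖ := by
        congr 1
        simp only [mul_sub, sub_mul, mul_one]
        abel
    _ ≤ ‖exp ((t - s) • A)‖ * ‖M‖ * ‖exp (s • B) - 1‖
          + ‖exp ((t - s) • A) - exp (t • A)‖ * ‖M‖ := by
        refine (norm_add_le _ _).trans (add_le_add ?_ (norm_mul_le _ _))
        exact (norm_mul_le _ _).trans (mul_le_mul_of_nonneg_right (norm_mul_le _ _) (norm_nonneg _))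
    _ ≤ Real.exp ‖A‖ * ‖M‖ * (Real.exp ‖B‖ * ‖B‖ * s) + Real.exp ‖A‖ * ‖A‖ * s * ‖M‖ := by
        gcongr
        exact norm_exp_smul_le A h_ts
    _ = Real.exp ‖A‖ * ‖M‖ * (Real.exp ‖B‖ * ‖B‖ + ‖A‖) * s := by ring

end OperatorExponential

lemma norm_intervalIntegral_sub_smul_le {E : Type*} [NormedAddCommGroup E] [NormedSpace ℝ E]
    [CompleteSpace E] {f : ℝ → E} {c : E} {K t : ℝ} (ht : 0 ≤ t) (hK : 0 ≤ K)
    (hf : IntervalIntegrable f volume 0 t) (hfc : ∀ s ∈ Ioc 0 t, ‖f s - c‖ ≤ K * s) :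
    ‖(∫ s in (0:ℝ)..t, f s) - t • c‖ ≤ K * t ^ 2 := by
  have hsplit : (∫ s in (0:ℝ)..t, f s) - t • c = ∫ s in (0:ℝ)..t, (f s - c) := by
    rw [intervalIntegral.integral_sub hf intervalIntegrable_const, intervalIntegral.integral_const,
      sub_zero]
  have hbound : ∀ s ∈ uIoc 0 t, ‖f s - c‖ ≤ K * t := by
    rw [uIoc_of_le ht]
    exact fun s hs => (hfc s hs).trans (mul_le_mul_of_nonneg_left hs.2 hK)
  calc ‖(∫ s in (0:ℝ)..t, f s) - t • c‖
      ≤ K * t * |t - 0| := hsplit ▸ intervalIntegral.norm_integral_le_of_norm_le_const hbound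
    _ = K * t ^ 2 := by rw [sub_zero, abs_of_nonneg ht]; ring

theorem t_model_second_order_general
    {E : Type*} [NormedAddCommGroup E] [NormedSpace ℝ E] [CompleteSpace E]
    (L P : E →L[ℝ] E) (Q : E →L[ℝ] E)
    (v : E) :
    ∃ C > (0:ℝ), ∃ δ > (0:ℝ), ∀ t : ℝ, 0 ≤ t → t ≤ δ →
      ‖(∫ s in (0:ℝ)..t,
          NormedSpace.exp ((t - s) • L)
            (P (L (NormedSpace.exp (s • (Q * L)) (Q (L v))))))
        - t • NormedSpace.exp (t • L) (P (L (Q (L v))))‖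
        ≤ C * t ^ 2 := by
  set w := Q (L v)
  set K := Real.exp ‖L‖ * ‖P * L‖ * (Real.exp ‖Q * L‖ * ‖Q * L‖ + ‖L‖) * ‖w‖
  have hK : 0 ≤ K := by positivity
  refine ⟨K + 1, by positivity, 1, one_pos, fun t ht ht1 => ?_⟩
  have hcont : Continuous fun s : ℝ =>
      exp ((t - s) • L) (P (L (exp (s • (Q * L)) w))) := by
    have hexp (A : E →L[ℝ] E) : Continuous fun u : ℝ => exp (u • A) :=
      (differentiable_exp_smul_const ℝ A).continuous
    have hexp_L := (hexp L).comp (continuous_sub_left t)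
    fun_prop
  have hclose : ∀ s ∈ Ioc 0 t,
      ‖exp ((t - s) • L) (P (L (exp (s • (Q * L)) w))) - exp (t • L) (P (L w))‖ ≤ K * s := by
    intro s hs
    calc _ = ‖(exp ((t - s) • L) * (P * L) * exp (s • (Q * L)) - exp (t • L) * (P * L)) w‖ := rfl
      _ ≤ _ * ‖w‖ := ContinuousLinearMap.le_opNorm _ _
      _ ≤ _ := by
        rw [mul_right_comm]
        gcongr
        exact norm_exp_mul_mul_exp_sub_exp_mul_le L (P * L) (Q * L) hs.1.le hs.2 ht1
  calc _ ≤ K * t ^ 2 :=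
        norm_intervalIntegral_sub_smul_le ht hK (hcont.intervalIntegrable 0 t) hclose
    _ ≤ (K + 1) * t ^ 2 := by gcongr; linarith

/-- **Second-order accuracy of the t-model.**
For continuous linear operators `L, P` on a Banach space with `P` a projection and `Q = I - P`,
and for every `v`, the t-model approximation `t · exp (tL) PLQLv` of the Mori–Zwanzig memory
term `∫₀ᵗ exp ((t-s)L) PL exp (sQL) QLv ds` is accurate to `O(t²)` as `t → 0`. -/
theorem t_model_second_order
    {E : Type*} [NormedAddCommGroup E] [NormedSpace ℝ E] [CompleteSpace E]
    (L P : E →L[ℝ] E) (hP : P * P = P) (Q : E →L[ℝ] E) (hQ : Q = 1 - P)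
    (v : E) :
    ∃ C > (0:ℝ), ∃ δ > (0:ℝ), ∀ t : ℝ, 0 ≤ t → t ≤ δ →
      ‖(∫ s in (0:ℝ)..t,
          NormedSpace.exp ((t - s) • L)
            (P (L (NormedSpace.exp (s • (Q * L)) (Q (L v))))))
        - t • NormedSpace.exp (t • L) (P (L (Q (L v))))‖
        ≤ C * t ^ 2 :=
  t_model_second_order_general L P Q v
end

section
/- Let Φ = (Φ₁, Φ₂) : [0, ∞) → ℝ² be a differentiable solution of the t-model equations for the Hald system: dΦ₁/dt = Φ₂ and dΦ₂/dt = −Φ₁ (1 + 1/(1 + Φ₁²)) − 2t Φ₁² Φ₂ / (1 + Φ₁²)². Let Ĥ(Φ₁,Φ₂) = (1/2)(Φ₁² + Φ₂²) + (1/2) log(1 + Φ₁²) be the renormalized Hamiltonian (up to an additive constant). Then along any solution, d/dt [Ĥ(Φ₁(t), Φ₂(t))] = −2t Φ₁(t)² Φ₂(t)² / (1 + Φ₁(t)²)², and in particular d/dt Ĥ(Φ₁(t),Φ₂(t)) ≤ 0 for all t ≥ 0: the renormalized Hamiltonian is nonincreasing along trajectories of the t-model. -/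
/-!
Writing the t-model as Newton's equation `Φ₁'' = -V'(Φ₁) + F` with potential
`V(x) = x²/2 + log(1 + x²)/2` and the memory force `F = -2t Φ₁² Φ₂/(1 + Φ₁²)²`, the renormalized
Hamiltonian is the energy `Φ₂²/2 + V(Φ₁)`, whose rate of change is the power `F Φ₂` of the force.
That power is `-2t Φ₁² Φ₂²/(1 + Φ₁²)²`, which is nonpositive for `t ≥ 0`.
-/

open Real

theorem HasDerivWithinAt.kinetic_add_potential {x y V : ℝ → ℝ} {s : Set ℝ} {t V' F : ℝ}
    (hx : HasDerivWithinAt x (y t) s t) (hy : HasDerivWithinAt y (-V' + F) s t)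
    (hV : HasDerivAt V V' (x t)) :
    HasDerivWithinAt (fun u => y u ^ 2 / 2 + V (x u)) (F * y t) s t := by
  have := ((hy.pow 2).div_const 2).add (hV.comp_hasDerivWithinAt t hx)
  exact this.congr_deriv (by simp only [Nat.cast_ofNat]; ring)

noncomputable def haldPotential (x : ℝ) : ℝ := x ^ 2 / 2 + log (1 + x ^ 2) / 2

theorem hasDerivAt_haldPotential (x : ℝ) :
    HasDerivAt haldPotential (x * (1 + 1 / (1 + x ^ 2))) x := by
  have hpos : 0 < 1 + x ^ 2 := by positivity
  have hsq : HasDerivAt (fun x : ℝ => 1 + x ^ 2) (2 * x) x := by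
    simpa using ((hasDerivAt_id x).pow 2).const_add 1
  have := (((hasDerivAt_id x).pow 2).div_const 2).add ((hsq.log hpos.ne').div_const 2)
  exact this.congr_deriv (by simp only [id, Nat.cast_ofNat]; field_simp; ring)

/-- **The renormalized Hamiltonian decays along t-model trajectories of the Hald system.**
If `(Φ₁, Φ₂)` is a differentiable solution on `[0,∞)` of the t-model equations
`dΦ₁/dt = Φ₂`, `dΦ₂/dt = -Φ₁(1 + 1/(1+Φ₁²)) - 2t Φ₁²Φ₂/(1+Φ₁²)²`, and
`Ĥ(Φ₁,Φ₂) = (1/2)(Φ₁² + Φ₂²) + (1/2) log (1+Φ₁²)` is the renormalized Hamiltonian (up to an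
additive constant), then along any solution
`d/dt Ĥ(Φ₁(t),Φ₂(t)) = -2t Φ₁(t)²Φ₂(t)²/(1+Φ₁(t)²)² ≤ 0` for all `t ≥ 0`. -/
theorem hald_t_model_hamiltonian_decay
    (Φ₁ Φ₂ : ℝ → ℝ)
    (h₁ : ∀ t : ℝ, 0 ≤ t →
      HasDerivWithinAt Φ₁ (Φ₂ t) (Set.Ici (0:ℝ)) t)
    (h₂ : ∀ t : ℝ, 0 ≤ t →
      HasDerivWithinAt Φ₂
        (-(Φ₁ t) * (1 + 1 / (1 + (Φ₁ t)^2))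
          - 2 * t * (Φ₁ t)^2 * Φ₂ t / (1 + (Φ₁ t)^2)^2)
        (Set.Ici (0:ℝ)) t) :
    ∀ t : ℝ, 0 ≤ t →
      HasDerivWithinAt
        (fun s : ℝ => (1/2) * ((Φ₁ s)^2 + (Φ₂ s)^2) + (1/2) * Real.log (1 + (Φ₁ s)^2))
        (-2 * t * (Φ₁ t)^2 * (Φ₂ t)^2 / (1 + (Φ₁ t)^2)^2)
        (Set.Ici (0:ℝ)) t
      ∧ -2 * t * (Φ₁ t)^2 * (Φ₂ t)^2 / (1 + (Φ₁ t)^2)^2 ≤ 0 := by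
  intro t ht
  set F := -2 * t * Φ₁ t ^ 2 * Φ₂ t / (1 + Φ₁ t ^ 2) ^ 2
  have hforce : HasDerivWithinAt Φ₂ (-(Φ₁ t * (1 + 1 / (1 + Φ₁ t ^ 2))) + F) (Set.Ici 0) t :=
    (h₂ t ht).congr_deriv (by ring)
  have henergy := (h₁ t ht).kinetic_add_potential hforce (hasDerivAt_haldPotential (Φ₁ t))
  constructor
  · convert henergy using 1
    · funext s
      simp only [haldPotential]
      ring
    · ring
  · rw [neg_mul, neg_mul, neg_mul, neg_div, neg_nonpos]
    positivity
end

section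
/- Let H be a real Hilbert space, let L be a continuous linear operator on H, let P be the orthogonal projection onto a closed subspace of H, and set Q = I − P. Then for every v ∈ H, w in the range of P, and t ∈ ℝ: ⟨exp(tQL) Q v, w⟩ = 0; that is, the noise process exp(tQL)Qv stays orthogonal to the space of resolved observables for all time. -/
open RealInnerProductSpace

theorem NormedSpace.exp_apply_mem_of_mapsTo {𝕂 E : Type*} [RCLike 𝕂] [NormedAddCommGroup E]
    [NormedSpace 𝕂 E] [CompleteSpace E] {S : Submodule 𝕂 E} (hS : IsClosed (S : Set E))
    {A : E →L[𝕂] E} (hA : ∀ x ∈ S, A x ∈ S) {x : E} (hx : x ∈ S) :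
    NormedSpace.exp A x ∈ S := by
  have hpow : ∀ n : ℕ, (A ^ n) x ∈ S := by
    intro n
    induction n with
    | zero => simpa using hx
    | succ n ih => rw [pow_succ']; exact hA _ ih
  have hsum : HasSum (fun n : ℕ => (n.factorial⁻¹ : 𝕂) • (A ^ n) x) (NormedSpace.exp A x) := by
    rw [congrFun (NormedSpace.exp_eq_tsum 𝕂) A]
    exact ((NormedSpace.expSeries_summable' A).hasSum).mapL (ContinuousLinearMap.apply 𝕂 E x)
  exact hS.mem_of_tendsto hsum (.of_forall fun s => S.sum_mem fun n _ => S.smul_mem _ (hpow n))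

theorem noise_orthogonal_to_resolved_general
    {H : Type*} [NormedAddCommGroup H] [InnerProductSpace ℝ H] [CompleteSpace H]
    (L : H →L[ℝ] H)
    (K : Submodule ℝ H) [K.HasOrthogonalProjection]
    (P : H →L[ℝ] H) (hP : ∀ x : H, P x = (K.orthogonalProjectionOnto x : H))
    (Q : H →L[ℝ] H) (hQ : Q = 1 - P)
    (v w : H) (hw : w ∈ K) (t : ℝ) :
    ⟪NormedSpace.exp (t • (Q * L)) (Q v), w⟫ = 0 := by
  have hQ_mem : ∀ x, Q x ∈ Kᗮ := fun x => by
    rw [hQ, sub_apply, one_apply_eq_self, hP]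
    exact K.sub_starProjection_mem_orthogonal x
  have hnoise : NormedSpace.exp (t • (Q * L)) (Q v) ∈ Kᗮ :=
    NormedSpace.exp_apply_mem_of_mapsTo K.isClosed_orthogonal
      (fun x _ => Kᗮ.smul_mem t (hQ_mem (L x))) (hQ_mem v)
  exact K.inner_left_of_mem_orthogonal hw hnoise

/-- **The noise stays orthogonal to the resolved observables.**
On a real Hilbert space, for a continuous linear operator `L` and the orthogonal projection `P`
onto a closed subspace `K` (with `Q = I - P`), for every `v`, every `w` in the range of `P`,
and every `t`: `⟨exp (tQL) (Q v), w⟩ = 0`. -/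
theorem noise_orthogonal_to_resolved
    {H : Type*} [NormedAddCommGroup H] [InnerProductSpace ℝ H] [CompleteSpace H]
    (L : H →L[ℝ] H)
    (K : Submodule ℝ H) (hK : IsClosed (K : Set H)) [K.HasOrthogonalProjection]
    (P : H →L[ℝ] H) (hP : ∀ x : H, P x = (K.orthogonalProjectionOnto x : H))
    (Q : H →L[ℝ] H) (hQ : Q = 1 - P)
    (v w : H) (hw : w ∈ K) (t : ℝ) :
    ⟪NormedSpace.exp (t • (Q * L)) (Q v), w⟫ = 0 :=
  noise_orthogonal_to_resolved_general L K P hP Q hQ v w hw t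
end
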